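/- For any families of vectors (v_i) and (ṽ_i) with each v_i ≠ 0, if Σᵢ ‖ṽᵢ‖₂²/(2‖vᵢ‖₂) ≤ Σᵢ ‖vᵢ‖₂²/(2‖vᵢ‖₂), then Σᵢ ‖ṽᵢ‖₂ ≤ Σᵢ ‖vᵢ‖₂. -/
import Mathlib

/-- Reweighted ℓ₂ lemma: if Σ ‖ṽᵢ‖²/(2‖vᵢ‖) ≤ Σ ‖vᵢ‖²/(2‖vᵢ‖), then
Σ ‖ṽᵢ‖ ≤ Σ ‖vᵢ‖. -/
theorem reweighted_sum_norm_le {ι : Type*} [Fintype ι] {d : ℕ}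
    (v vtil : ι → EuclideanSpace ℝ (Fin d)) (hv : ∀ i, 0 < ‖v i‖)
    (h : ∑ i, ‖vtil i‖ ^ 2 / (2 * ‖v i‖) ≤ ∑ i, ‖v i‖ ^ 2 / (2 * ‖v i‖)) :
    ∑ i, ‖vtil i‖ ≤ ∑ i, ‖v i‖ := by
  have key : ∀ i, ‖vtil i‖ ≤ ‖vtil i‖ ^ 2 / (2 * ‖v i‖) + ‖v i‖ / 2 := by
    intro i
    have hb := hv i
    rw [div_add_div _ _ (by positivity) (by norm_num : (2:ℝ) ≠ 0), le_div_iff₀ (by positivity)]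
    nlinarith [sq_nonneg (‖vtil i‖ - ‖v i‖)]
  have heq : ∀ i, ‖v i‖ ^ 2 / (2 * ‖v i‖) = ‖v i‖ / 2 := by
    intro i
    field_simp [(hv i).ne']
  calc ∑ i, ‖vtil i‖ ≤ ∑ i, (‖vtil i‖ ^ 2 / (2 * ‖v i‖) + ‖v i‖ / 2) :=
        Finset.sum_le_sum fun i _ => key i
    _ = ∑ i, ‖vtil i‖ ^ 2 / (2 * ‖v i‖) + ∑ i, ‖v i‖ / 2 := Finset.sum_add_distrib
    _ ≤ ∑ i, ‖v i‖ ^ 2 / (2 * ‖v i‖) + ∑ i, ‖v i‖ / 2 := by linarith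
    _ = ∑ i, ‖v i‖ := by
        simp only [heq]
        rw [← Finset.sum_add_distrib]
        simp [add_halves]
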